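/- Let n ≥ 2. Every instance of the axiom schema (SD_n) Oα → ¬O¬α is valid with respect to strict swap Kripke models for C_nᴰ, i.e., for every strict swap Kripke model M for C_nᴰ, every world w and every formula α, v^n_w(Oα → ¬O¬α) ∈ D_n. -/

import Mathlib

/-- Formulas over the signature Σ₁ᴰ = {∧, ∨, →, ¬, O}, with countably many
propositional variables. -/
inductive Form : Type
  | var : ℕ → Form
  | and : Form → Form → Form
  | or : Form → Form → Form
  | imp : Form → Form → Form
  | neg : Form → Form
  | obl : Form → Form

namespace Form

/-- α⁰ = α, α^{k+1} = ¬(α^k ∧ ¬α^k). -/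
def pow (α : Form) : ℕ → Form
  | 0 => α
  | k + 1 => ((α.pow k).and (α.pow k).neg).neg

/-- α^{(n)} = α¹ ∧ … ∧ αⁿ (for n ≥ 1). -/
def bigPow (α : Form) : ℕ → Form
  | 0 => α.pow 1
  | 1 => α.pow 1
  | m + 2 => (α.bigPow (m + 1)).and (α.pow (m + 2))

/-- ∼^{(n)}α := ¬α ∧ α^{(n)}. -/
def snn (n : ℕ) (α : Form) : Form := α.neg.and (α.bigPow n)

end Form

/-- The n+2 snapshots of the swap structure for C_nᴰ: T_n, t^n_0, …, t^n_{n-1}, F_n. -/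
inductive SVn (n : ℕ) : Type
  | T : SVn n
  | t : Fin n → SVn n
  | F : SVn n
deriving DecidableEq

namespace SVn

/-- The coordinates of a snapshot, as an element of 2^{n+1} (0-indexed):
T_n = (1,0,1,…,1), t^n_i has its unique 0 at (0-indexed) position i+2
(so t^n_{n-1} = (1,…,1)), and F_n = (0,1,…,1). -/
def coord {n : ℕ} : SVn n → Fin (n + 1) → Bool
  | .T, j => decide (j.val ≠ 1)
  | .t i, j => decide (j.val ≠ i.val + 2)
  | .F, j => decide (j.val ≠ 0)

/-- First coordinate z₁. -/
def p1 {n : ℕ} (z : SVn n) : Bool := z.coord 0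

/-- Second coordinate z₂. -/
def p2 {n : ℕ} (z : SVn n) : Bool := z.coord 1

/-- Designated values D_n = A_n ∖ {F_n}, i.e. first coordinate 1. -/
def desig {n : ℕ} (z : SVn n) : Prop := z.p1 = true

/-- Boolean values Boo_n = {T_n, F_n}. -/
def boo {n : ℕ} (z : SVn n) : Prop := z = SVn.T ∨ z = SVn.F

/-- Inconsistent values I_n = A_n ∖ Boo_n. -/
def incons {n : ℕ} (z : SVn n) : Prop := ∃ i : Fin n, z = SVn.t i

end SVn

/-- Boolean implication a ⊃ b. -/
def boolImp (a b : Bool) : Bool := !a || b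

/-- Membership of c in a #̃ b for a binary connective # with Boolean counterpart
`op`: c₁ = a₁ op b₁, and moreover c ∈ Boo_n whenever a, b ∈ Boo_n. -/
def opCond {n : ℕ} (op : Bool → Bool → Bool) (c a b : SVn n) : Prop :=
  c.p1 = op a.p1 b.p1 ∧ (a.boo → b.boo → c.boo)

/-- Swap Kripke pre-model conditions for C_nᴰ on a serial frame (W,R) with
valuations v_w : Form → A_n. -/
structure IsPreModelCnD (n : ℕ) {W : Type} (R : W → W → Prop)
    (v : W → Form → SVn n) : Prop where
  serial : ∀ w, ∃ w', R w w'
  and_ : ∀ w α β, opCond (· && ·) (v w (α.and β)) (v w α) (v w β)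
  or_ : ∀ w α β, opCond (· || ·) (v w (α.or β)) (v w α) (v w β)
  imp_ : ∀ w α β, opCond boolImp (v w (α.imp β)) (v w α) (v w β)
  neg_ : ∀ w α, (v w α.neg).p1 = (v w α).p2 ∧ (v w α.neg).p2 ≤ (v w α).p1
  obl_ : ∀ w α, ((v w α.obl).p1 = true ↔ ∀ w', R w w' → (v w' α).p1 = true)

/-- The RNmatrix restrictions on valuations:
(i) v_w(α) = t^n_0 implies v_w(α ∧ ¬α) = T_n;
(ii) for 1 ≤ k ≤ n−1, v_w(α) = t^n_k implies v_w(α ∧ ¬α) ∈ I_n and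
v_w(α¹) = t^n_{k−1}. -/
def RestrCnD (n : ℕ) {W : Type} (v : W → Form → SVn n) : Prop :=
  (∀ (w : W) (α : Form) (h0 : 0 < n),
      v w α = SVn.t ⟨0, h0⟩ → v w (α.and α.neg) = SVn.T) ∧
  (∀ (w : W) (α : Form) (k : ℕ) (hk : k < n), 1 ≤ k → v w α = SVn.t ⟨k, hk⟩ →
      (v w (α.and α.neg)).incons ∧ v w (α.pow 1) = SVn.t ⟨k - 1, by omega⟩)

/-- A swap Kripke model for C_nᴰ: a pre-model satisfying the restrictions (i), (ii)
and (iii): v_w(α) ∈ Boo_n implies v_w(Oα) ∈ Boo_n. -/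
structure IsModelCnD (n : ℕ) {W : Type} (R : W → W → Prop)
    (v : W → Form → SVn n) : Prop where
  pre : IsPreModelCnD n R v
  restr : RestrCnD n v
  booObl : ∀ w α, (v w α).boo → (v w α.obl).boo

/-- A strict swap Kripke model for C_nᴰ: additionally, v_w(Oα) ∈ D_n implies
v_{w'}(α) = T_n for every w' with w R w'. -/
structure IsStrictModelCnD (n : ℕ) {W : Type} (R : W → W → Prop)
    (v : W → Form → SVn n) : Prop where
  toModel : IsModelCnD n R v
  strict : ∀ (w : W) (α : Form), (v w α.obl).desig →
    ∀ w', R w w' → v w' α = SVn.T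

namespace SVn

variable {n : ℕ}

theorem p2_T (hn : 1 ≤ n) : (T : SVn n).p2 = false := by
  simp [p2, coord, Nat.mod_eq_of_lt (show 1 < n + 1 by omega)]

theorem p2_F (hn : 1 ≤ n) : (F : SVn n).p2 = true := by
  simp [p2, coord, Nat.mod_eq_of_lt (show 1 < n + 1 by omega)]

theorem eq_F_of_p1_eq_false {z : SVn n} (hz : z.p1 = false) : z = F := by
  cases z <;> simp_all [p1, coord]

end SVn

namespace IsPreModelCnD

variable {n : ℕ} {W : Type} {R : W → W → Prop} {v : W → Form → SVn n}

theorem p1_neg_eq_false_of_eq_T (hM : IsPreModelCnD n R v) (hn : 1 ≤ n) {w : W}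
    {α : Form} (hα : v w α = SVn.T) : (v w α.neg).p1 = false := by
  rw [(hM.neg_ w α).1, hα, SVn.p2_T hn]

theorem p1_neg_eq_true_of_p1_eq_false (hM : IsPreModelCnD n R v) (hn : 1 ≤ n) {w : W}
    {α : Form} (hα : (v w α).p1 = false) : (v w α.neg).p1 = true := by
  rw [(hM.neg_ w α).1, SVn.eq_F_of_p1_eq_false hα, SVn.p2_F hn]

theorem p1_obl_eq_false (hM : IsPreModelCnD n R v) {w : W} {α : Form}
    (hα : ∀ w', R w w' → (v w' α).p1 = false) : (v w α.obl).p1 = false := by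
  obtain ⟨w', hw'⟩ := hM.serial w
  by_contra h
  simpa [hα w' hw'] using (hM.obl_ w α).1 (Bool.not_eq_false _ ▸ h) w' hw'

end IsPreModelCnD

/-- Every instance of (SD_n) Oα → ¬O¬α is valid w.r.t. strict swap Kripke models
for C_nᴰ (n ≥ 2). -/
theorem SDn_valid (n : ℕ) (hn : 2 ≤ n) {W : Type} (R : W → W → Prop)
    (v : W → Form → SVn n) (hM : IsStrictModelCnD n R v) :
    ∀ (w : W) (α : Form), (v w (α.obl.imp α.neg.obl.neg)).desig := by
  intro w α
  have hpre := hM.toModel.pre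
  rw [SVn.desig, (hpre.imp_ w _ _).1, boolImp]
  cases hO : (v w α.obl).p1
  · rfl
  · -- strictness makes `α` take the value `T` at every successor, so `¬α` is nowhere designated
    have hOneg : (v w α.neg.obl).p1 = false := hpre.p1_obl_eq_false fun w' hw' =>
      hpre.p1_neg_eq_false_of_eq_T (by omega) (hM.strict w α hO w' hw')
    simp [hpre.p1_neg_eq_true_of_p1_eq_false (by omega) hOneg]
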